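/- Let X_1, ..., X_m be independent mean-zero real random vectors in ℝ^p with |X_{ij}| ≤ B a.s. and max_j m^{-1} Σ_i E[X_{ij}²] ≤ σ². Then E[max_{1≤j≤p} |m^{-1/2} Σ_{i=1}^m X_{ij}|] ≤ C(σ√(log p) + B log(p)/√m) for a universal constant C. -/

import Mathlib

/-!
Bernstein's mgf bound combined with the soft-max trick. For `|x| ≤ 1` one has
`exp x ≤ 1 + x + x²`, so `|t| B ≤ 1` gives `E exp(t X_ij) ≤ exp(t² E X_ij²)` and, by independence,
`E exp(± u S_j) ≤ exp(u² m σ²)` for `S_j = Σ_i X_ij` and `0 < u ≤ 1/B`. Jensen's inequality for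
`exp` and `exp(u max_j |S_j|) ≤ Σ_j (exp(u S_j) + exp(-u S_j))` then yield
`u E max_j |S_j| ≤ log(2p) + u² m σ²`; optimizing over `u` gives the bound.
-/

open Real MeasureTheory ProbabilityTheory

theorem Real.log_two_mul_le_two_mul_log {x : ℝ} (hx : 2 ≤ x) : log (2 * x) ≤ 2 * log x := by
  rw [log_mul two_ne_zero (by linarith), two_mul]
  gcongr

theorem Real.sqrt_log_two_mul_le {x : ℝ} (hx : 2 ≤ x) : √(log (2 * x)) ≤ 2 * √(log x) := by
  calc √(log (2 * x)) ≤ √(2 ^ 2 * log x) :=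
        sqrt_le_sqrt (by linarith [log_two_mul_le_two_mul_log hx, log_nonneg (by linarith : 1 ≤ x)])
    _ = 2 * √(log x) := by rw [sqrt_mul (sq_nonneg 2), sqrt_sq zero_le_two]

theorem Real.exp_mul_iSup_abs_le_sum {ι : Type*} [Fintype ι] [Nonempty ι] (x : ι → ℝ) (u : ℝ) :
    exp (u * ⨆ j, |x j|) ≤ ∑ j, (exp (u * x j) + exp (-u * x j)) := by
  obtain ⟨j, hj⟩ := exists_eq_ciSup_of_finite (f := fun j => |x j|)
  rw [← hj]
  calc exp (u * |x j|) ≤ exp (u * x j) + exp (-u * x j) := by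
        rcases abs_cases (x j) with ⟨h, -⟩ | ⟨h, -⟩
        · rw [h]; linarith [exp_pos (-u * x j)]
        · rw [h, mul_neg, ← neg_mul]; linarith [exp_pos (u * x j)]
    _ ≤ ∑ j, (exp (u * x j) + exp (-u * x j)) :=
        Finset.single_le_sum (f := fun j => exp (u * x j) + exp (-u * x j))
          (fun _ _ => by positivity) (Finset.mem_univ j)

-- The witness is `u = min (r / s) B⁻¹`, which balances the two terms of `r² / u + u s²`.
theorem exists_pos_mul_le_one_sq_div_add_mul_sq_le {r s B : ℝ} (hr : 0 < r) (hs : 0 < s)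
    (hB : 0 < B) : ∃ u, 0 < u ∧ u * B ≤ 1 ∧ r ^ 2 / u + u * s ^ 2 ≤ 2 * (s * r + B * r ^ 2) := by
  rcases le_total (r / s) B⁻¹ with h | h
  · refine ⟨r / s, by positivity, by rwa [← one_div, le_div_iff₀ hB] at h, ?_⟩
    have : r ^ 2 / (r / s) + r / s * s ^ 2 = 2 * (s * r) := by field_simp; ring
    nlinarith [mul_pos hB (pow_pos hr 2)]
  · refine ⟨B⁻¹, by positivity, by rw [inv_mul_cancel₀ hB.ne'], ?_⟩
    have hsB : s ≤ B * r := by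
      rwa [inv_le_iff_one_le_mul₀ hB, div_mul_eq_mul_div, one_le_div hs, mul_comm] at h
    have : B⁻¹ * s ^ 2 ≤ B * r ^ 2 := by
      rw [inv_mul_le_iff₀ hB]; nlinarith
    rw [div_inv_eq_mul]
    nlinarith [mul_pos hs hr]

namespace ProbabilityTheory

variable {Ω : Type*} {mΩ : MeasurableSpace Ω} {μ : Measure Ω}

theorem integrable_exp_mul_of_ae_abs_le [IsFiniteMeasure μ] {f : Ω → ℝ} {b : ℝ}
    (hf : AEMeasurable f μ) (hbd : ∀ᵐ ω ∂μ, |f ω| ≤ b) (t : ℝ) :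
    Integrable (fun ω => exp (t * f ω)) μ := by
  refine .of_bound (hf.const_mul t).exp.aestronglyMeasurable (exp (|t| * b)) ?_
  filter_upwards [hbd] with ω h
  rw [norm_of_nonneg (exp_pos _).le, exp_le_exp]
  calc t * f ω ≤ |t| * |f ω| := abs_mul t (f ω) ▸ le_abs_self _
    _ ≤ |t| * b := by gcongr

variable [IsProbabilityMeasure μ]

theorem mgf_le_exp_mul_integral_sq {Y : Ω → ℝ} {b t : ℝ} (hY : AEMeasurable Y μ)
    (hbd : ∀ᵐ ω ∂μ, |Y ω| ≤ b) (hmean : ∫ ω, Y ω ∂μ = 0) (htb : |t| * b ≤ 1) :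
    mgf Y μ t ≤ exp (t ^ 2 * ∫ ω, Y ω ^ 2 ∂μ) := by
  have hY1 : Integrable Y μ := .of_bound hY.aestronglyMeasurable b (by simpa using hbd)
  have hY2 : Integrable (fun ω => Y ω ^ 2) μ := by
    refine .of_bound (hY.pow_const 2).aestronglyMeasurable (b ^ 2) ?_
    filter_upwards [hbd] with ω h
    rw [norm_pow, norm_eq_abs]
    exact pow_le_pow_left₀ (abs_nonneg _) h 2
  have hquad : Integrable (fun ω => 1 + t * Y ω + t ^ 2 * Y ω ^ 2) μ :=
    ((integrable_const 1).add (hY1.const_mul t)).add (hY2.const_mul _)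
  have hpt : ∀ᵐ ω ∂μ, exp (t * Y ω) ≤ 1 + t * Y ω + t ^ 2 * Y ω ^ 2 := by
    filter_upwards [hbd] with ω h
    have h1 : |t * Y ω| ≤ 1 := by
      rw [abs_mul]; exact (mul_le_mul_of_nonneg_left h (abs_nonneg t)).trans htb
    linarith [(abs_le.1 (abs_exp_sub_one_sub_id_le h1)).2, mul_pow t (Y ω) 2]
  calc mgf Y μ t ≤ ∫ ω, (1 + t * Y ω + t ^ 2 * Y ω ^ 2) ∂μ :=
        integral_mono_ae (integrable_exp_mul_of_ae_abs_le hY hbd t) hquad hpt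
    _ = 1 + t ^ 2 * ∫ ω, Y ω ^ 2 ∂μ := by
        rw [integral_add (f := fun ω => 1 + t * Y ω)
            ((integrable_const 1).add (hY1.const_mul t)) (hY2.const_mul _),
          integral_add (integrable_const (1 : ℝ)) (hY1.const_mul t), integral_const_mul,
          integral_const_mul, hmean]
        simp
    _ ≤ exp (t ^ 2 * ∫ ω, Y ω ^ 2 ∂μ) := by linarith [add_one_le_exp (t ^ 2 * ∫ ω, Y ω ^ 2 ∂μ)]

theorem iIndepFun.mgf_sum_le_exp {ι : Type*} {Y : ι → Ω → ℝ} {b t : ℝ} (hind : iIndepFun Y μ)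
    (hY : ∀ i, AEMeasurable (Y i) μ) (hbd : ∀ i, ∀ᵐ ω ∂μ, |Y i ω| ≤ b)
    (hmean : ∀ i, ∫ ω, Y i ω ∂μ = 0) (htb : |t| * b ≤ 1) (s : Finset ι) :
    mgf (∑ i ∈ s, Y i) μ t ≤ exp (t ^ 2 * ∑ i ∈ s, ∫ ω, Y i ω ^ 2 ∂μ) := by
  rw [hind.mgf_sum₀ hY, Finset.mul_sum, exp_sum]
  exact Finset.prod_le_prod (fun _ _ => mgf_nonneg)
    fun i _ => mgf_le_exp_mul_integral_sq (hY i) (hbd i) (hmean i) htb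

theorem mul_integral_iSup_abs_le {ι : Type*} [Fintype ι] [Nonempty ι] {S : ι → Ω → ℝ}
    {b u K : ℝ} (hS : ∀ j, AEMeasurable (S j) μ) (hbd : ∀ᵐ ω ∂μ, ∀ j, |S j ω| ≤ b)
    (hpos : ∀ j, mgf (S j) μ u ≤ exp K) (hneg : ∀ j, mgf (S j) μ (-u) ≤ exp K) :
    u * ∫ ω, ⨆ j, |S j ω| ∂μ ≤ log (2 * Fintype.card ι) + K := by
  set M : Ω → ℝ := fun ω => ⨆ j, |S j ω|
  have hM : AEMeasurable M μ := AEMeasurable.iSup fun j => (hS j).abs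
  have hMbd : ∀ᵐ ω ∂μ, |M ω| ≤ b := by
    filter_upwards [hbd] with ω h
    rw [abs_of_nonneg (Real.iSup_nonneg fun j => abs_nonneg _)]
    exact ciSup_le h
  have hSexp : ∀ j t, Integrable (fun ω => exp (t * S j ω)) μ := fun j =>
    integrable_exp_mul_of_ae_abs_le (hS j) (by filter_upwards [hbd] with ω h using h j)
  have hjensen : exp (u * ∫ ω, M ω ∂μ) ≤ ∫ ω, exp (u * M ω) ∂μ := by
    rw [← integral_const_mul]
    exact convexOn_exp.map_integral_le continuousOn_exp isClosed_univ (by simp)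
      ((Integrable.of_bound hM.aestronglyMeasurable b (by simpa using hMbd)).const_mul u)
      (integrable_exp_mul_of_ae_abs_le hM hMbd u)
  have hsoftmax : ∫ ω, exp (u * M ω) ∂μ ≤ ∑ j, (mgf (S j) μ u + mgf (S j) μ (-u)) := by
    calc ∫ ω, exp (u * M ω) ∂μ ≤ ∫ ω, ∑ j, (exp (u * S j ω) + exp (-u * S j ω)) ∂μ :=
          integral_mono (integrable_exp_mul_of_ae_abs_le hM hMbd u)
            (integrable_finsetSum _ fun j _ => (hSexp j u).add (hSexp j (-u)))
            fun ω => exp_mul_iSup_abs_le_sum (fun j => S j ω) u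
      _ = ∑ j, (mgf (S j) μ u + mgf (S j) μ (-u)) := by
          rw [integral_finsetSum (f := fun j ω => exp (u * S j ω) + exp (-u * S j ω)) _
            fun j _ => (hSexp j u).add (hSexp j (-u))]
          exact Finset.sum_congr rfl fun j _ => integral_add (hSexp j u) (hSexp j (-u))
  have hsum : ∑ j, (mgf (S j) μ u + mgf (S j) μ (-u)) ≤ 2 * Fintype.card ι * exp K := by
    calc ∑ j, (mgf (S j) μ u + mgf (S j) μ (-u)) ≤ ∑ _j : ι, 2 * exp K :=
          Finset.sum_le_sum fun j _ => by linarith [hpos j, hneg j]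
      _ = 2 * Fintype.card ι * exp K := by simp [Finset.card_univ]; ring
  rw [← log_exp K, ← log_mul (by positivity) (exp_pos K).ne', le_log_iff_exp_le (by positivity)]
  exact hjensen.trans (hsoftmax.trans hsum)

theorem integral_iSup_abs_sum_le {ι κ : Type*} [Fintype ι] [Fintype κ] [Nonempty κ]
    {X : ι → κ → Ω → ℝ} {B s : ℝ} (hB : 0 < B) (hs : 0 < s) (hX : ∀ i j, AEMeasurable (X i j) μ)
    (hind : iIndepFun (fun i ω j => X i j ω) μ) (hmean : ∀ i j, ∫ ω, X i j ω ∂μ = 0)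
    (hbd : ∀ᵐ ω ∂μ, ∀ i j, |X i j ω| ≤ B) (hvar : ∀ j, ∑ i, ∫ ω, X i j ω ^ 2 ∂μ ≤ s ^ 2) :
    ∫ ω, ⨆ j, |∑ i, X i j ω| ∂μ ≤
      2 * (s * √(log (2 * Fintype.card κ)) + B * log (2 * Fintype.card κ)) := by
  set L := log (2 * Fintype.card κ)
  have hL : 0 < L := log_pos (by have := Fintype.card_pos (α := κ); norm_cast; omega)
  have hmgf : ∀ j t, |t| * B ≤ 1 → mgf (fun ω => ∑ i, X i j ω) μ t ≤ exp (t ^ 2 * s ^ 2) := by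
    intro j t ht
    rw [← Finset.sum_fn]
    refine ((hind.comp (fun _ x => x j) fun _ => measurable_pi_apply j).mgf_sum_le_exp
      (fun i => hX i j) (fun i => hbd.mono fun ω h => h i j) (fun i => hmean i j) ht _).trans ?_
    exact exp_le_exp.2 (by gcongr; exact hvar j)
  obtain ⟨u, hu, huB, hopt⟩ := exists_pos_mul_le_one_sq_div_add_mul_sq_le (sqrt_pos.2 hL) hs hB
  have hsoft := mul_integral_iSup_abs_le (K := u ^ 2 * s ^ 2)
    (fun j => Finset.aemeasurable_fun_sum _ fun i _ => hX i j)
    (hbd.mono fun ω h j => (Finset.abs_sum_le_sum_abs _ _).trans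
      (Finset.sum_le_sum fun i _ => h i j))
    (fun j => hmgf j u (by rwa [abs_of_pos hu]))
    (fun j => by simpa using hmgf j (-u) (by rwa [abs_neg, abs_of_pos hu]))
  rw [sq_sqrt hL.le] at hopt
  refine le_trans ?_ hopt
  rw [div_add' _ _ _ hu.ne', le_div_iff₀ hu]
  linarith

end ProbabilityTheory

/-- Maximal inequality for independent bounded centered random vectors: there is a universal
constant `C` such that `E[max_j |m^{-1/2} Σ_i X_{ij}|] ≤ C (σ √(log p) + B log p / √m)`. -/
theorem stmt18 :
    ∃ C : ℝ, 0 < C ∧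
      ∀ (Ω : Type) (mΩ : MeasurableSpace Ω) (μ : Measure Ω), IsProbabilityMeasure μ →
        ∀ (m p : ℕ), 1 ≤ m → 2 ≤ p →
          ∀ (X : Fin m → Fin p → Ω → ℝ) (B σ : ℝ), 0 < B → 0 < σ →
            (∀ i j, Measurable (X i j)) →
            iIndepFun (m := fun _ : Fin m => (inferInstance : MeasurableSpace (Fin p → ℝ)))
              (fun i ω j => X i j ω) μ →
            (∀ i j, ∫ ω, X i j ω ∂μ = 0) →
            (∀ᵐ ω ∂μ, ∀ i j, |X i j ω| ≤ B) →
            (∀ j, (m : ℝ)⁻¹ * ∑ i : Fin m, ∫ ω, X i j ω ^ 2 ∂μ ≤ σ ^ 2) →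
            (∫ ω, ⨆ j : Fin p, |(m : ℝ) ^ (-(1:ℝ)/2) * ∑ i : Fin m, X i j ω| ∂μ) ≤
              C * (σ * Real.sqrt (Real.log p) + B * Real.log p / Real.sqrt m) := by
  refine ⟨4, by norm_num, ?_⟩
  intro Ω _ μ _ m p hm hp X B σ hB hσ hX hind hmean hbd hvar
  have : Nonempty (Fin p) := ⟨⟨0, by omega⟩⟩
  have hm0 : (0 : ℝ) < m := by exact_mod_cast hm
  have hp2 : (2 : ℝ) ≤ p := by exact_mod_cast hp
  have hbern := integral_iSup_abs_sum_le hB (by positivity : 0 < σ * √m)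
    (fun i j => (hX i j).aemeasurable) hind hmean hbd fun j => by
      rw [mul_pow, sq_sqrt hm0.le, mul_comm, ← inv_mul_le_iff₀ hm0]
      exact hvar j
  rw [Fintype.card_fin] at hbern
  have hscale : ∀ ω, ⨆ j : Fin p, |(m : ℝ) ^ (-(1:ℝ)/2) * ∑ i : Fin m, X i j ω|
      = (√m)⁻¹ * ⨆ j, |∑ i, X i j ω| := fun ω => by
    rw [Real.mul_iSup_of_nonneg (by positivity)]
    congr 1 with j
    rw [abs_mul, sqrt_eq_rpow, ← rpow_neg hm0.le, abs_of_pos (by positivity)]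
    norm_num
  simp_rw [hscale, integral_const_mul]
  calc (√m)⁻¹ * ∫ ω, ⨆ j, |∑ i, X i j ω| ∂μ
      ≤ (√m)⁻¹ * (2 * (σ * √m * √(log (2 * p)) + B * log (2 * p))) := by gcongr
    _ = 2 * σ * √(log (2 * p)) + 2 * B * log (2 * p) / √m := by field_simp
    _ ≤ 4 * (σ * √(log p) + B * log p / √m) := by
        have h1 := mul_le_mul_of_nonneg_left (sqrt_log_two_mul_le hp2) hσ.le
        have h2 : 2 * B * log (2 * p) / √m ≤ 4 * (B * log p / √m) := by
          rw [mul_div_assoc', div_le_div_iff_of_pos_right (by positivity)]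
          nlinarith [log_two_mul_le_two_mul_log hp2]
        nlinarith
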